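/- Let n ≥ 3. For all i, k ∈ {1,…,n}: ∫_{S^{n−1}} Σ_{a,b} (𝕃G_{(k)})_{ab}(ω) ω^b (e_{(i)})^a dA(ω) = 2 δ_{ik}. -/

import Mathlib

/-!
On the unit sphere the derivative of the homogeneous Green's function is explicit, and contracting
`𝕃G_{(k)}` with `ω` gives `4 C_n n (n-2) δ_{ik} + 4 C_n n (n-2)² ω_i ω_k`. Hausdorff measure on
the sphere is invariant under coordinate reflections and permutations, so
`∫ ω_i ω_k = δ_{ik} |S^{n-1}| / n`, and the integral is
`8 C_n (n-1)(n-2) |S^{n-1}| δ_{ik} = 2 δ_{ik}`. This needs `0 < |S^{n-1}| < ∞`: the sphere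
projects onto the open unit ball of `ℝ^{n-1}`, and it is covered by finitely many Lipschitz
images of a ball, namely the radial projections of the faces of a cube.
-/

open MeasureTheory Finset
open scoped ENNReal

noncomputable section

abbrev Euc (n : ℕ) : Type := EuclideanSpace ℝ (Fin n)

variable {n : ℕ}

/-- Partial derivative in coordinate direction `i`. -/
def pd (i : Fin n) (f : Euc n → ℝ) : Euc n → ℝ :=
  fun x => fderiv ℝ f x (EuclideanSpace.single i 1)

/-- Iterated partial derivative along a list of coordinate directions. -/
def pdList : List (Fin n) → (Euc n → ℝ) → Euc n → ℝ
  | [], f => f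
  | i :: L, f => pd i (pdList L f)

/-- The canonical list of coordinate directions associated to a multi-index. -/
def mlist (α : Fin n → ℕ) : List (Fin n) :=
  ((List.finRange n).map fun i => List.replicate (α i) i).flatten

/-- Multi-index partial derivative `∂_α`. -/
def mderiv (α : Fin n → ℕ) (f : Euc n → ℝ) : Euc n → ℝ :=
  pdList (mlist α) f

/-- The Euclidean Laplacian. -/
def lap (f : Euc n → ℝ) : Euc n → ℝ :=
  fun x => ∑ i, pd i (pd i f) x

/-- The Euclidean conformal Killing operator `(𝕃 W)_{a b}`. -/
def cko (W : Euc n → Euc n) (a b : Fin n) : Euc n → ℝ :=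
  fun x => pd a (fun y => W y b) x + pd b (fun y => W y a) x
    - (if a = b then 2 / (n : ℝ) else 0) * ∑ c, pd c (fun y => W y c) x

/-- The Euclidean vector Laplacian `(P̄ W)_a = ½ Σ_b ∂_b (𝕃W)_{a b}`. -/
def vecLap (W : Euc n → Euc n) : Euc n → Euc n :=
  fun x => (EuclideanSpace.equiv (Fin n) ℝ).symm fun a => (1 / 2) * ∑ b, pd b (cko W a b) x

/-- `f` is positively homogeneous of degree `d`: `f (t • x) = t ^ d • f x` for `t > 0`, `x ≠ 0`. -/
def PosHomog {F : Type*} [SMul ℝ F] (d : ℝ) (f : Euc n → F) : Prop :=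
  ∀ t : ℝ, 0 < t → ∀ x : Euc n, x ≠ 0 → f (t • x) = t ^ d • f x

/-- The surface measure on the unit sphere `S^{n-1} ⊆ ℝ^n`
((n-1)-dimensional Hausdorff measure restricted to the sphere). -/
def sphMeas (n : ℕ) : Measure (Euc n) :=
  (μH[(n : ℝ) - 1]).restrict (Metric.sphere (0 : Euc n) 1)

/-- `|S^{n-1}|`, the total surface measure of the unit sphere. -/
def sphVol (n : ℕ) : ℝ := (sphMeas n Set.univ).toReal

/-- The constant `C_n = 1 / (4 (n-1) (n-2) |S^{n-1}|)`. -/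
def Cconst (n : ℕ) : ℝ := 1 / (4 * ((n : ℝ) - 1) * ((n : ℝ) - 2) * sphVol n)

/-- The Green's function `G^{ab}` of the Euclidean vector Laplacian. -/
def GreenFn (n : ℕ) (a b : Fin n) (x : Euc n) : ℝ :=
  -2 * Cconst n * ‖x‖ ^ ((2 : ℝ) - n) *
    ((3 * (n : ℝ) - 2) * (if a = b then 1 else 0)
      + ((n : ℝ) - 2) ^ 2 * (x a / ‖x‖) * (x b / ‖x‖))

/-- The `j`-th column `G_{(j)}` of the Green's function. -/
def GreenCol (n : ℕ) (j : Fin n) : Euc n → Euc n :=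
  fun x => (EuclideanSpace.equiv (Fin n) ℝ).symm fun a => GreenFn n a j x

/-- The Japanese-bracket weight `⟨x⟩^{-n - p δ}`. -/
def jweight (n : ℕ) (p δ : ℝ) (x : Euc n) : ℝ :=
  (1 + ‖x‖ ^ 2) ^ ((-(n : ℝ) - p * δ) / 2)

/-- The finite set of multi-indices of total degree at most `k`. -/
def midx (n k : ℕ) : Finset (Fin n → Fin (k + 1)) :=
  Finset.univ.filter fun α => ∑ i, (α i : ℕ) ≤ k

/-- The `p`-th power of the weighted Sobolev norm `‖f‖_{W^{k,p}_δ}`, with the integrals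
taken over the set `s`. -/
def wnormPOn (p δ : ℝ) (k : ℕ) (f : Euc n → ℝ) (s : Set (Euc n)) : ℝ≥0∞ :=
  ∑ α ∈ midx n k,
    ∫⁻ x in s, ENNReal.ofReal (jweight n p δ x * |mderiv (fun i => (α i : ℕ)) f x| ^ p)

/-- The `p`-th power of the weighted Sobolev norm `‖f‖_{W^{k,p}_δ}`. -/
def wnormP (p δ : ℝ) (k : ℕ) (f : Euc n → ℝ) : ℝ≥0∞ := wnormPOn p δ k f Set.univ

/-- The weighted Sobolev norm `‖f‖_{W^{k,p}_δ}` of a scalar function, valued in `ℝ≥0∞`. -/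
def wnorm (p δ : ℝ) (k : ℕ) (f : Euc n → ℝ) : ℝ≥0∞ := wnormP p δ k f ^ (1 / p)

/-- The weighted Sobolev norm of a vector field: componentwise, summed. -/
def wnormV (p δ : ℝ) (k : ℕ) (F : Euc n → Euc n) : ℝ≥0∞ :=
  ∑ a, wnorm p δ k fun x => F x a

/-- A weight `δ` is nonexceptional if it is not an integer, or if `2 - n < δ < 0`. -/
def Nonexceptional (n : ℕ) (δ : ℝ) : Prop :=
  (¬ ∃ m : ℤ, δ = m) ∨ (2 - (n : ℝ) < δ ∧ δ < 0)

section NormalizeLipschitz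

variable {E : Type*} [NormedAddCommGroup E] [NormedSpace ℝ E]

lemma lipschitzOnWith_normalize :
    LipschitzOnWith 2 (NormedSpace.normalize : E → E) {x | 1 ≤ ‖x‖} := by
  refine LipschitzOnWith.of_dist_le_mul fun x (hx : 1 ≤ ‖x‖) y (hy : 1 ≤ ‖y‖) => ?_
  have hx0 : 0 < ‖x‖ := one_pos.trans_le hx
  have hy0 : 0 < ‖y‖ := one_pos.trans_le hy
  have hsplit : NormedSpace.normalize x - NormedSpace.normalize y
      = ‖x‖⁻¹ • (x - y) + (‖x‖⁻¹ - ‖y‖⁻¹) • y := by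
    simp only [NormedSpace.normalize, smul_sub, sub_smul]; abel
  have h1 : ‖‖x‖⁻¹ • (x - y)‖ ≤ ‖x - y‖ := by
    rw [norm_smul, norm_inv, norm_norm]
    exact mul_le_of_le_one_left (norm_nonneg _) (inv_le_one_of_one_le₀ hx)
  have h2 : ‖(‖x‖⁻¹ - ‖y‖⁻¹) • y‖ ≤ ‖x - y‖ := calc
    ‖(‖x‖⁻¹ - ‖y‖⁻¹) • y‖ = |‖x‖ - ‖y‖| / ‖x‖ := by
      rw [norm_smul, Real.norm_eq_abs, inv_sub_inv hx0.ne' hy0.ne', abs_div,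
        abs_of_pos (mul_pos hx0 hy0), abs_sub_comm]
      field_simp
    _ ≤ ‖x - y‖ / 1 := div_le_div₀ (norm_nonneg _) (abs_norm_sub_norm_le x y) one_pos hx
    _ = ‖x - y‖ := div_one _
  rw [dist_eq_norm, dist_eq_norm, hsplit, NNReal.coe_two]
  linarith [norm_add_le (‖x‖⁻¹ • (x - y)) ((‖x‖⁻¹ - ‖y‖⁻¹) • y)]

end NormalizeLipschitz

section NormRpow

variable {E : Type*} [NormedAddCommGroup E] [InnerProductSpace ℝ E]

theorem hasFDerivAt_norm_rpow_of_ne_zero {x : E} (hx : x ≠ 0) (p : ℝ) :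
    HasFDerivAt (fun x : E ↦ ‖x‖ ^ p) ((p * ‖x‖ ^ (p - 2)) • innerSL ℝ x) x := by
  convert! (hasStrictFDerivAt_norm_sq x).hasFDerivAt.rpow_const (p := p / 2)
    (by simp [hx]) using 0
  simp_rw [← Real.rpow_natCast_mul (norm_nonneg _), ← Nat.cast_smul_eq_nsmul ℝ, smul_smul]
  ring_nf

end NormRpow

section InsertCoord

variable {m : ℕ}

def insertCoord (a : Fin (m + 1)) (t : ℝ) (y : Euc m) : Euc (m + 1) :=
  WithLp.toLp 2 (Fin.insertNth (α := fun _ => ℝ) a t y.ofLp)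

def dropCoord (a : Fin (m + 1)) (x : Euc (m + 1)) : Euc m :=
  WithLp.toLp 2 fun j => x (a.succAbove j)

@[simp]
lemma insertCoord_apply_same (a : Fin (m + 1)) (t : ℝ) (y : Euc m) :
    insertCoord a t y a = t :=
  Fin.insertNth_apply_same (α := fun _ => ℝ) a t y.ofLp

@[simp]
lemma insertCoord_apply_succAbove (a : Fin (m + 1)) (t : ℝ) (y : Euc m) (j : Fin m) :
    insertCoord a t y (a.succAbove j) = y j :=
  Fin.insertNth_apply_succAbove (α := fun _ => ℝ) a t y.ofLp j

@[simp]
lemma dropCoord_apply (a : Fin (m + 1)) (x : Euc (m + 1)) (j : Fin m) :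
    dropCoord a x j = x (a.succAbove j) := rfl

@[simp]
lemma dropCoord_insertCoord (a : Fin (m + 1)) (t : ℝ) (y : Euc m) :
    dropCoord a (insertCoord a t y) = y := by
  ext j; simp

lemma norm_sq_eq_sq_add_norm_sq_dropCoord (a : Fin (m + 1)) (x : Euc (m + 1)) :
    ‖x‖ ^ 2 = x a ^ 2 + ‖dropCoord a x‖ ^ 2 := by
  simp [EuclideanSpace.real_norm_sq_eq, Fin.sum_univ_succAbove _ a]

lemma norm_sq_insertCoord (a : Fin (m + 1)) (t : ℝ) (y : Euc m) :
    ‖insertCoord a t y‖ ^ 2 = t ^ 2 + ‖y‖ ^ 2 := by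
  simp [norm_sq_eq_sq_add_norm_sq_dropCoord a]

lemma insertCoord_sub_insertCoord (a : Fin (m + 1)) (t : ℝ) (y y' : Euc m) :
    insertCoord a t y - insertCoord a t y' = insertCoord a 0 (y - y') := by
  ext i
  induction i using Fin.succAboveCases a <;> simp

lemma dropCoord_sub (a : Fin (m + 1)) (x x' : Euc (m + 1)) :
    dropCoord a x - dropCoord a x' = dropCoord a (x - x') := by
  ext j; simp

lemma isometry_insertCoord (a : Fin (m + 1)) (t : ℝ) : Isometry (insertCoord (m := m) a t) := by
  refine Isometry.of_dist_eq fun y y' => ?_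
  rw [dist_eq_norm, dist_eq_norm, insertCoord_sub_insertCoord,
    ← sq_eq_sq₀ (norm_nonneg _) (norm_nonneg _), norm_sq_insertCoord]
  ring

lemma lipschitzWith_dropCoord (a : Fin (m + 1)) : LipschitzWith 1 (dropCoord (m := m) a) := by
  refine LipschitzWith.of_dist_le_mul fun x x' => ?_
  rw [NNReal.coe_one, one_mul, dist_eq_norm, dist_eq_norm, dropCoord_sub]
  refine le_of_sq_le_sq ?_ (norm_nonneg _)
  rw [norm_sq_eq_sq_add_norm_sq_dropCoord a (x - x')]
  nlinarith [sq_nonneg ((x - x') a)]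

end InsertCoord

section SphereMeasure

variable {m : ℕ}

instance isAddHaarMeasure_hausdorffMeasure_euc :
    (μH[(m : ℝ)] : Measure (Euc m)).IsAddHaarMeasure := by
  simpa using isAddHaarMeasure_hausdorffMeasure (E := Euc m)

lemma ball_subset_dropCoord_image_sphere (a : Fin (m + 1)) :
    Metric.ball (0 : Euc m) 1 ⊆ dropCoord a '' Metric.sphere 0 1 := by
  intro y hy
  have hy1 : ‖y‖ < 1 := mem_ball_zero_iff.1 hy
  refine ⟨insertCoord a √(1 - ‖y‖ ^ 2) y, ?_, dropCoord_insertCoord a _ y⟩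
  rw [mem_sphere_zero_iff_norm, ← sq_eq_sq₀ (norm_nonneg _) zero_le_one, norm_sq_insertCoord,
    Real.sq_sqrt (by nlinarith [norm_nonneg y])]
  ring

theorem hausdorffMeasure_sphere_pos : 0 < μH[(m : ℝ)] (Metric.sphere (0 : Euc (m + 1)) 1) :=
  calc 0 < μH[(m : ℝ)] (Metric.ball (0 : Euc m) 1) := Metric.isOpen_ball.measure_pos _ ⟨0, by simp⟩
    _ ≤ μH[(m : ℝ)] (dropCoord 0 '' Metric.sphere (0 : Euc (m + 1)) 1) :=
      measure_mono (ball_subset_dropCoord_image_sphere 0)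
    _ ≤ 1 ^ (m : ℝ) * μH[(m : ℝ)] (Metric.sphere (0 : Euc (m + 1)) 1) := by
      simpa using (lipschitzWith_dropCoord 0).hausdorffMeasure_image_le (Nat.cast_nonneg m) _
    _ = μH[(m : ℝ)] (Metric.sphere (0 : Euc (m + 1)) 1) := by simp

lemma lipschitzOnWith_normalize_insertCoord (a : Fin (m + 1)) {σ : ℝ} (hσ : |σ| = 1) :
    LipschitzOnWith 2 (NormedSpace.normalize ∘ insertCoord a σ) Set.univ := by
  have hmaps : Set.MapsTo (insertCoord a σ) Set.univ {x | 1 ≤ ‖x‖} := fun y _ => by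
    have hσ2 : σ ^ 2 = 1 := by rw [← sq_abs, hσ, one_pow]
    have := norm_sq_insertCoord a σ y
    show 1 ≤ ‖insertCoord a σ y‖
    nlinarith [norm_nonneg (insertCoord a σ y), norm_nonneg y]
  simpa only [mul_one] using lipschitzOnWith_normalize.comp
    (isometry_insertCoord a σ).lipschitz.lipschitzOnWith hmaps

lemma sphere_subset_iUnion_image_normalize_insertCoord :
    Metric.sphere (0 : Euc (m + 1)) 1 ⊆
      ⋃ a, ⋃ σ ∈ ({-1, 1} : Finset ℝ),
        (NormedSpace.normalize ∘ insertCoord a σ) '' Metric.closedBall 0 √m := by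
  intro ω hω
  have hω1 : ‖ω‖ = 1 := mem_sphere_zero_iff_norm.1 hω
  obtain ⟨a, -, ha⟩ := Finset.exists_max_image Finset.univ (fun i => |ω i|) Finset.univ_nonempty
  have hωa : ω a ≠ 0 := by
    intro h0
    have : ω = 0 := by
      ext i; simpa [h0] using ha i (Finset.mem_univ i)
    simp [this] at hω1
  set c := |ω a|⁻¹ with hc_def
  have hc : 0 < c := inv_pos.2 (abs_pos.2 hωa)
  have hσ : |c * ω a| = 1 := by
    rw [abs_mul, abs_of_pos hc, hc_def, inv_mul_cancel₀ (abs_ne_zero.2 hωa)]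
  have hins : insertCoord a (c * ω a) (c • dropCoord a ω) = c • ω := by
    ext i; induction i using Fin.succAboveCases a <;> simp
  have hy : c • dropCoord a ω ∈ Metric.closedBall (0 : Euc m) √m := by
    rw [mem_closedBall_zero_iff, ← abs_norm]
    refine Real.abs_le_sqrt ?_
    rw [EuclideanSpace.real_norm_sq_eq]
    refine (Finset.sum_le_sum (g := fun _ => (1 : ℝ)) fun j _ => ?_).trans_eq (by simp)
    rw [← sq_abs, sq_le_one_iff₀ (abs_nonneg _), PiLp.smul_apply, smul_eq_mul, abs_mul,
      abs_of_pos hc, dropCoord_apply, hc_def, inv_mul_le_one₀ (abs_pos.2 hωa)]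
    exact ha _ (Finset.mem_univ _)
  refine Set.mem_iUnion.2 ⟨a, Set.mem_iUnion₂.2 ⟨c * ω a, ?_, c • dropCoord a ω, hy, ?_⟩⟩
  · rcases (abs_eq zero_le_one).1 hσ with h | h <;> simp [h]
  · rw [Function.comp_apply, hins, NormedSpace.normalize_smul_of_pos hc,
      NormedSpace.normalize_eq_self_of_norm_eq_one hω1]

theorem hausdorffMeasure_sphere_lt_top :
    μH[(m : ℝ)] (Metric.sphere (0 : Euc (m + 1)) 1) < ⊤ := by
  refine (measure_mono sphere_subset_iUnion_image_normalize_insertCoord).trans_lt ?_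
  refine (measure_iUnion_fintype_le _ _).trans_lt (ENNReal.sum_lt_top.2 fun a _ => ?_)
  refine (measure_biUnion_finset_le _ _).trans_lt (ENNReal.sum_lt_top.2 fun σ hσ => ?_)
  have hσ1 : |σ| = 1 := by
    rcases Finset.mem_insert.1 hσ with rfl | hσ <;> simp_all
  refine (((lipschitzOnWith_normalize_insertCoord a hσ1).mono (Set.subset_univ _))
    |>.hausdorffMeasure_image_le (Nat.cast_nonneg m)).trans_lt ?_
  exact ENNReal.mul_lt_top (by simp) (isCompact_closedBall _ _).measure_lt_top

end SphereMeasure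

section IsotropicMoments

def reflectCoord (i : Fin n) : Euc n ≃ₗᵢ[ℝ] Euc n :=
  LinearIsometryEquiv.piLpCongrRight 2
    (Function.update (fun _ => LinearIsometryEquiv.refl ℝ ℝ) i (LinearIsometryEquiv.neg ℝ))

lemma reflectCoord_apply (i j : Fin n) (x : Euc n) :
    reflectCoord i x j = if j = i then -x j else x j := by
  by_cases h : j = i <;> simp [reflectCoord, h]

def swapCoord (i k : Fin n) : Euc n ≃ₗᵢ[ℝ] Euc n :=
  LinearIsometryEquiv.piLpCongrLeft 2 ℝ ℝ (Equiv.swap i k)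

lemma swapCoord_apply (i k j : Fin n) (x : Euc n) :
    swapCoord i k x j = x (Equiv.swap i k j) := by
  simp [swapCoord, Equiv.symm_swap]

variable {ν : Measure (Euc n)}

theorem integral_coord_mul_coord_of_isotropic
    (hν : ∀ T : Euc n ≃ₗᵢ[ℝ] Euc n, MeasurePreserving T ν ν)
    (hint : Integrable (fun x => ‖x‖ ^ 2) ν) (i k : Fin n) :
    ∫ x, x i * x k ∂ν = if i = k then (∫ x, ‖x‖ ^ 2 ∂ν) / n else 0 := by
  have hcomp (T : Euc n ≃ₗᵢ[ℝ] Euc n) (f : Euc n → ℝ) : ∫ x, f (T x) ∂ν = ∫ x, f x ∂ν :=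
    (hν T).integral_comp T.toHomeomorph.measurableEmbedding f
  split_ifs with hik
  · subst hik
    have hsq_int (j : Fin n) : Integrable (fun x : Euc n => x j ^ 2) ν :=
      hint.mono' (by fun_prop) (Filter.Eventually.of_forall fun x => by
        simpa [abs_pow] using pow_le_pow_left₀ (abs_nonneg _) (PiLp.norm_apply_le x j) 2)
    have hsq_eq (j : Fin n) : ∫ x, x j ^ 2 ∂ν = ∫ x, x i ^ 2 ∂ν := by
      simpa [swapCoord_apply] using hcomp (swapCoord j i) fun x => x i ^ 2
    have hsum : ∫ x, ‖x‖ ^ 2 ∂ν = n * ∫ x, x i ^ 2 ∂ν := by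
      simp_rw [EuclideanSpace.real_norm_sq_eq]
      rw [integral_finsetSum _ fun j _ => hsq_int j]
      simp [hsq_eq]
    rw [hsum, mul_div_cancel_left₀ _ (Nat.cast_ne_zero.2 (Fin.pos i).ne')]
    simp_rw [sq]
  · have := hcomp (reflectCoord i) fun x => x i * x k
    simp only [reflectCoord_apply, if_true, if_neg (Ne.symm hik), neg_mul, integral_neg] at this
    linarith

end IsotropicMoments

section SphereMoments

lemma measurePreserving_restrict_sphere (d : ℝ) (T : Euc n ≃ₗᵢ[ℝ] Euc n) :
    MeasurePreserving T (μH[d].restrict (Metric.sphere 0 1))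
      (μH[d].restrict (Metric.sphere 0 1)) := by
  simpa [T.preimage_sphere] using
    (T.toIsometryEquiv.measurePreserving_hausdorffMeasure d).restrict_preimage
      (Metric.isClosed_sphere (x := (0 : Euc n)) (ε := 1)).measurableSet

theorem integral_sphere_coord_mul_coord {d : ℝ}
    (hS : μH[d] (Metric.sphere (0 : Euc n) 1) ≠ ⊤) (i k : Fin n) :
    ∫ ω in Metric.sphere (0 : Euc n) 1, ω i * ω k ∂μH[d]
      = if i = k then (μH[d] (Metric.sphere (0 : Euc n) 1)).toReal / n else 0 := by
  have hnorm : Set.EqOn (fun _ => (1 : ℝ)) (fun x : Euc n => ‖x‖ ^ 2) (Metric.sphere 0 1) :=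
    fun x hx => by simp [mem_sphere_zero_iff_norm.1 hx]
  have hmeas : MeasurableSet (Metric.sphere (0 : Euc n) 1) := Metric.isClosed_sphere.measurableSet
  rw [integral_coord_mul_coord_of_isotropic (measurePreserving_restrict_sphere d)
      ((integrableOn_const hS).congr_fun hnorm hmeas) i k,
    ← setIntegral_congr_fun hmeas hnorm, setIntegral_const, smul_eq_mul, mul_one,
    measureReal_def]

lemma integrableOn_sphere_coord_mul_coord {d : ℝ}
    (hS : μH[d] (Metric.sphere (0 : Euc n) 1) ≠ ⊤) (i k : Fin n) :
    IntegrableOn (fun ω : Euc n => ω i * ω k) (Metric.sphere 0 1) μH[d] := by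
  refine Measure.integrableOn_of_bounded (M := 1) hS
    (by fun_prop : Continuous _).aestronglyMeasurable
    (ae_restrict_of_forall_mem Metric.isClosed_sphere.measurableSet fun ω hω => ?_)
  have hω : ‖ω‖ = 1 := mem_sphere_zero_iff_norm.1 hω
  rw [norm_mul]
  exact mul_le_one₀ ((PiLp.norm_apply_le ω i).trans_eq hω) (norm_nonneg _)
    ((PiLp.norm_apply_le ω k).trans_eq hω)

end SphereMoments

lemma greenFn_eventuallyEq {ω : Euc n} (hω : ω ≠ 0) (a c : Fin n) :
    GreenFn n a c =ᶠ[nhds ω] fun x => -2 * Cconst n *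
      ((3 * (n : ℝ) - 2) * (if a = c then 1 else 0) * ‖x‖ ^ ((2 : ℝ) - n)
        + ((n : ℝ) - 2) ^ 2 * (x a * x c * ‖x‖ ^ (-(n : ℝ)))) := by
  filter_upwards [isOpen_ne.mem_nhds hω] with x hx
  have hx0 : 0 < ‖x‖ := norm_pos_iff.2 hx
  have hpow : ‖x‖ ^ ((2 : ℝ) - n) = ‖x‖ ^ (-(n : ℝ)) * ‖x‖ ^ 2 := by
    rw [sub_eq_neg_add, Real.rpow_add hx0, Real.rpow_two]
  rw [GreenFn, hpow]
  field_simp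

theorem pd_greenFn {ω : Euc n} (hω : ‖ω‖ = 1) (a c b : Fin n) :
    pd b (GreenFn n a c) ω = -2 * Cconst n *
      ((3 * (n : ℝ) - 2) * (if a = c then 1 else 0) * (2 - n) * ω b
        + ((n : ℝ) - 2) ^ 2 * ((if a = b then 1 else 0) * ω c + (if c = b then 1 else 0) * ω a
          - n * (ω a * ω c * ω b))) := by
  have hω0 : ω ≠ 0 := by rintro rfl; simp at hω
  have hcoord (j : Fin n) :
      HasFDerivAt (fun x : Euc n => x j) (EuclideanSpace.proj (𝕜 := ℝ) j) ω :=
    (EuclideanSpace.proj (𝕜 := ℝ) j).hasFDerivAt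
  have hrad := (hasFDerivAt_norm_rpow_of_ne_zero hω0 ((2 : ℝ) - n)).const_mul
    ((3 * (n : ℝ) - 2) * (if a = c then 1 else 0))
  have hquad := (((hcoord a).mul (hcoord c)).mul
    (hasFDerivAt_norm_rpow_of_ne_zero hω0 (-(n : ℝ)))).const_mul (((n : ℝ) - 2) ^ 2)
  have hG := (hrad.add hquad).const_mul (-2 * Cconst n)
  rw [pd, (hG.congr_of_eventuallyEq (greenFn_eventuallyEq hω0 a c)).fderiv]
  simp only [smul_apply, add_apply, innerSL_apply_apply,
    EuclideanSpace.inner_single_right, PiLp.proj_apply, PiLp.single_apply, Pi.mul_apply, hω,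
    Real.one_rpow, smul_eq_mul, conj_trivial]
  split_ifs <;> ring

lemma greenCol_apply (k c : Fin n) (y : Euc n) : GreenCol n k y c = GreenFn n c k y := rfl

lemma sum_sq_coord_eq_one {ω : Euc n} (hω : ‖ω‖ = 1) : ∑ b, ω b ^ 2 = 1 := by
  rw [← EuclideanSpace.real_norm_sq_eq, hω, one_pow]

theorem divergence_greenCol {ω : Euc n} (hω : ‖ω‖ = 1) (k : Fin n) :
    ∑ c, pd c (fun y => GreenCol n k y c) ω = 4 * Cconst n * n * (n - 2) * ω k := by
  have hterm (c : Fin n) : pd c (fun y => GreenCol n k y c) ω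
      = -2 * Cconst n * ((3 * n - 2) * (2 - n) + (n - 2) ^ 2) * ((if c = k then 1 else 0) * ω c)
        - 2 * Cconst n * (n - 2) ^ 2 * ω k + 2 * Cconst n * n * (n - 2) ^ 2 * ω k * ω c ^ 2 := by
    simp only [greenCol_apply, pd_greenFn hω, @eq_comm _ k c, if_true]
    ring
  simp only [hterm, Finset.sum_add_distrib, Finset.sum_sub_distrib, ← Finset.mul_sum, boole_mul,
    Finset.sum_ite_eq', Finset.mem_univ, if_true, Finset.sum_const, Finset.card_univ,
    Fintype.card_fin, nsmul_eq_mul, sum_sq_coord_eq_one hω]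
  ring

theorem sum_cko_greenCol_mul {ω : Euc n} (hω : ‖ω‖ = 1) (i k : Fin n) :
    ∑ b, cko (GreenCol n k) i b ω * ω b
      = 4 * Cconst n * n * (n - 2) * (if i = k then 1 else 0)
        + 4 * Cconst n * n * (n - 2) ^ 2 * (ω i * ω k) := by
  have hn : (n : ℝ) ≠ 0 := Nat.cast_ne_zero.2 (Fin.pos i).ne'
  have hterm (b : Fin n) : cko (GreenCol n k) i b ω * ω b
      = -2 * Cconst n * (((n - 2) ^ 2 + (3 * n - 2) * (2 - n)) * (if i = k then 1 else 0)
          - 2 * n * (n - 2) ^ 2 * (ω i * ω k)) * ω b ^ 2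
        - 2 * Cconst n * ((3 * n - 2) * (2 - n) + (n - 2) ^ 2) * ω i
          * ((if b = k then 1 else 0) * ω b)
        - 4 * Cconst n * ((n - 2) ^ 2 + 2 * (n - 2)) * ω k
          * ((if b = i then 1 else 0) * ω b) := by
    rw [cko, divergence_greenCol hω]
    simp only [greenCol_apply, pd_greenFn hω, ← mul_boole _ (2 / (n : ℝ)), @eq_comm _ k i,
      @eq_comm _ i b, @eq_comm _ k b]
    field_simp
    ring
  simp only [hterm, Finset.sum_sub_distrib, ← Finset.mul_sum, boole_mul,
    Finset.sum_ite_eq', Finset.mem_univ, if_true, sum_sq_coord_eq_one hω]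
  ring

theorem statement14 (n : ℕ) (hn : 3 ≤ n) (i k : Fin n) :
    ∫ ω in Metric.sphere (0 : Euc n) 1,
        (∑ a, ∑ b, cko (GreenCol n k) a b ω * ω b * (EuclideanSpace.single i (1 : ℝ)) a)
        ∂(μH[(n : ℝ) - 1]) = if i = k then 2 else 0 := by
  obtain ⟨m, rfl⟩ : ∃ m, n = m + 1 := ⟨n - 1, by omega⟩
  have hdim : ((m + 1 : ℕ) : ℝ) - 1 = m := by push_cast; ring
  have hfin := (hausdorffMeasure_sphere_lt_top (m := m)).ne
  have hvol : sphVol (m + 1) = (μH[(m : ℝ)] (Metric.sphere (0 : Euc (m + 1)) 1)).toReal := by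
    rw [sphVol, sphMeas, Measure.restrict_apply_univ, hdim]
  have hvol_pos : 0 < sphVol (m + 1) :=
    hvol ▸ ENNReal.toReal_pos hausdorffMeasure_sphere_pos.ne' hfin
  have hintegrand : ∀ ω ∈ Metric.sphere (0 : Euc (m + 1)) 1,
      ∑ a, ∑ b, cko (GreenCol (m + 1) k) a b ω * ω b * (EuclideanSpace.single i (1 : ℝ)) a
        = 4 * Cconst (m + 1) * (m + 1 : ℕ) * ((m + 1 : ℕ) - 2) * (if i = k then 1 else 0)
          + 4 * Cconst (m + 1) * (m + 1 : ℕ) * ((m + 1 : ℕ) - 2) ^ 2 * (ω i * ω k) := by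
    intro ω hω
    rw [← sum_cko_greenCol_mul (mem_sphere_zero_iff_norm.1 hω) i k]
    simp only [← Finset.sum_mul]
    simp only [PiLp.single_apply, mul_boole, Finset.sum_ite_eq', Finset.mem_univ, if_true]
  rw [hdim, setIntegral_congr_fun Metric.isClosed_sphere.measurableSet hintegrand,
    integral_add (by exact integrableOn_const hfin)
      ((integrableOn_sphere_coord_mul_coord hfin i k).const_mul _),
    setIntegral_const, integral_const_mul, integral_sphere_coord_mul_coord hfin, smul_eq_mul,
    measureReal_def, ← hvol, Cconst]
  have hn3 : (3 : ℝ) ≤ (m + 1 : ℕ) := by exact_mod_cast hn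
  have hn1 : ((m + 1 : ℕ) : ℝ) - 1 ≠ 0 := by linarith
  have hn2 : ((m + 1 : ℕ) : ℝ) - 2 ≠ 0 := by linarith
  split_ifs
  · field_simp
    ring
  · simp
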